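/- arXiv:1401.0815 — 2 statements merged into one kernel-verified Lean document; each statement's English description precedes it below -/
import Mathlib

section
/- For every nonnegative integer n and every real x, (1/√π) ∫_{-∞}^{∞} H_n(y) e^{-y²} e^{ixy} dy = iⁿ xⁿ e^{-x²/4} (an identity of complex numbers, where the integral is a complex-valued integral over the real line). -/
/-!
With `He_n` Mathlib's probabilists' Hermite polynomials, `H_n(y) = √2ⁿ He_n(√2 y)`, and the
recurrence `He_{n+1} = X He_n - He_n'` becomes the Rodrigues-type identity
`(H_n e^{-y²})' = -H_{n+1} e^{-y²}`. Since the Fourier integral turns differentiation into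
multiplication by `-ix`, the integral for `n + 1` is `ix` times the one for `n`, and for `n = 0`
it is the Fourier transform of the Gaussian, `√π e^{-x²/4}`.
-/

open MeasureTheory Finset

/-- Physicists' Hermite polynomial
`H_n(x) = n! · Σ_{m=0}^{⌊n/2⌋} (-1)^m (2x)^{n-2m} / (m! (n-2m)!)`. -/
noncomputable def hermiteH (n : ℕ) (x : ℝ) : ℝ :=
  (n.factorial : ℝ) * ∑ m ∈ Finset.range (n / 2 + 1),
    (-1 : ℝ) ^ m * (2 * x) ^ (n - 2 * m) /
      ((m.factorial : ℝ) * ((n - 2 * m).factorial : ℝ))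

open Polynomial
open scoped Nat

lemma Nat.factorial_two_mul (m : ℕ) : (2 * m)! = 2 ^ m * m ! * (2 * m - 1)‼ := by
  cases m with
  | zero => rfl
  | succ m =>
    rw [show 2 * (m + 1) = 2 * m + 1 + 1 by ring, Nat.factorial_eq_mul_doubleFactorial,
      Nat.add_sub_cancel, show 2 * m + 1 + 1 = 2 * (m + 1) by ring, Nat.doubleFactorial_two_mul]

lemma Nat.factorial_two_mul_add (m k : ℕ) :
    (2 * m + k)! = 2 ^ m * (2 * m - 1)‼ * (2 * m + k).choose k * m ! * k ! := by
  have h := Nat.choose_mul_factorial_mul_factorial (Nat.le_add_left k (2 * m))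
  rw [Nat.add_sub_cancel] at h
  rw [← h, Nat.factorial_two_mul]
  ring

lemma hermiteH_summand_eq (m k : ℕ) (x : ℝ) :
    ((2 * m + k)! : ℝ) * ((-1) ^ m * (2 * x) ^ k / (m ! * k !)) =
      √2 ^ (2 * m + k) * ((hermite (2 * m + k)).coeff k * (√2 * x) ^ k) := by
  have hfact : ((2 * m + k)! : ℝ) =
      2 ^ m * (2 * m - 1)‼ * (2 * m + k).choose k * m ! * k ! := by
    exact_mod_cast Nat.factorial_two_mul_add m k
  have hsq : √2 ^ 2 = 2 := Real.sq_sqrt (by norm_num)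
  have hsqk : √2 ^ k * √2 ^ k = 2 ^ k := by rw [← mul_pow, Real.mul_self_sqrt (by norm_num)]
  rw [coeff_hermite_explicit, hfact, pow_add, pow_mul, hsq, mul_pow, mul_pow (√2)]
  have : (m ! : ℝ) ≠ 0 := by positivity
  have : (k ! : ℝ) ≠ 0 := by positivity
  push_cast
  field_simp
  linear_combination (-((2 * m + k).choose k : ℝ) * x ^ k) * hsqk

lemma hermiteH_eq_aeval_hermite (n : ℕ) (x : ℝ) :
    hermiteH n x = √2 ^ n * aeval (√2 * x) (hermite n) := by
  -- the coefficients of `He_n` vanish outside the indices `n - 2m`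
  have hsub : (range (n / 2 + 1)).image (fun m => n - 2 * m) ⊆ range (n + 1) := by
    intro k hk
    simp only [mem_image, mem_range] at hk ⊢
    omega
  have hodd : ∀ k ∈ range (n + 1), k ∉ (range (n / 2 + 1)).image (fun m => n - 2 * m) →
      (hermite n).coeff k • (√2 * x) ^ k = 0 := by
    intro k hk hk'
    simp only [mem_image, mem_range, not_exists, not_and] at hk hk'
    have := hk' ((n - k) / 2)
    rw [coeff_hermite_of_odd_add (by rw [Nat.odd_iff]; omega), zero_smul]
  have hinj : Set.InjOn (fun m => n - 2 * m) (range (n / 2 + 1)) := by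
    intro m₁ h₁ m₂ h₂ h
    simp only [coe_range, Set.mem_Iio] at h₁ h₂ h
    omega
  rw [aeval_eq_sum_range, natDegree_hermite, ← sum_subset hsub hodd, sum_image hinj, hermiteH,
    mul_sum, mul_sum]
  refine sum_congr rfl fun m hm => ?_
  obtain ⟨k, rfl⟩ : ∃ k, n = 2 * m + k :=
    ⟨n - 2 * m, by simp only [mem_range] at hm; omega⟩
  rw [Nat.add_sub_cancel_left, hermiteH_summand_eq, zsmul_eq_mul]

lemma hasDerivAt_hermiteH (n : ℕ) (x : ℝ) :
    HasDerivAt (hermiteH n) (2 * x * hermiteH n x - hermiteH (n + 1) x) x := by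
  have hlin : HasDerivAt (fun y : ℝ => √2 * y) √2 x := by
    simpa using (hasDerivAt_id x).const_mul √2
  have h := (((hermite n).hasDerivAt_aeval (√2 * x)).comp x hlin).const_mul (√2 ^ n)
  rw [hermiteH_eq_aeval_hermite n x, hermiteH_eq_aeval_hermite (n + 1), hermite_succ,
    show hermiteH n = fun y => √2 ^ n * aeval (√2 * y) (hermite n) from
      funext (hermiteH_eq_aeval_hermite n)]
  refine h.congr_deriv ?_
  have hsq : √2 * √2 = 2 := Real.mul_self_sqrt (by norm_num)
  rw [map_sub, map_mul, aeval_X, pow_succ]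
  linear_combination (√2 ^ n * aeval (√2 * x) (hermite n) * x) * hsq

lemma hasDerivAt_hermiteH_mul_exp (n : ℕ) (x : ℝ) :
    HasDerivAt (fun y => hermiteH n y * Real.exp (-y ^ 2))
      (-(hermiteH (n + 1) x * Real.exp (-x ^ 2))) x := by
  have hexp : HasDerivAt (fun y : ℝ => Real.exp (-y ^ 2)) (-(2 * x) * Real.exp (-x ^ 2)) x := by
    simpa [mul_comm] using ((hasDerivAt_pow 2 x).neg).exp
  refine ((hasDerivAt_hermiteH n x).mul hexp).congr_deriv ?_
  ring

lemma integrable_pow_mul_exp_neg_mul_sq {b : ℝ} (hb : 0 < b) (k : ℕ) :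
    Integrable (fun x : ℝ => x ^ k * Real.exp (-b * x ^ 2)) := by
  simpa [Real.rpow_natCast] using
    integrable_rpow_mul_exp_neg_mul_sq hb (s := k) (by linarith [k.cast_nonneg (α := ℝ)])

lemma integrable_hermiteH_mul_exp (n : ℕ) :
    Integrable (fun y => hermiteH n y * Real.exp (-y ^ 2)) := by
  simp only [hermiteH, mul_sum, sum_mul]
  refine integrable_finsetSum _ fun m _ => ?_
  simpa [mul_pow, div_eq_mul_inv, mul_assoc, mul_comm, mul_left_comm] using
    (integrable_pow_mul_exp_neg_mul_sq one_pos (n - 2 * m)).const_mul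
      (n ! * ((-1) ^ m * 2 ^ (n - 2 * m) / (m ! * (n - 2 * m)!)))

open Complex in
lemma integral_cexp_smul_deriv {E : Type*} [NormedAddCommGroup E] [NormedSpace ℂ E]
    {g : ℝ → E} (hg : Integrable g) (hg' : Differentiable ℝ g) (hdg : Integrable (deriv g))
    (x : ℝ) :
    ∫ y : ℝ, cexp (I * x * y) • deriv g y =
      -(I * x) • ∫ y : ℝ, cexp (I * x * y) • g y := by
  -- Mathlib's Fourier kernel is `e^{-2πiyw}`; at `w = -x / (2π)` it is `e^{ixy}`.
  have key := congrFun (Real.fourier_deriv hg hg' hdg) (-x / (2 * Real.pi))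
  have hpi : (Real.pi : ℂ) ≠ 0 := ofReal_ne_zero.mpr Real.pi_ne_zero
  have hkernel (y : ℝ) :
      cexp (↑(-2 * Real.pi * y * (-x / (2 * Real.pi))) * I) = cexp (I * x * y) := by
    push_cast
    field_simp
  simp only [Real.fourier_real_eq_integral_exp_smul, hkernel] at key
  rw [key]
  push_cast
  field_simp

open Complex in
lemma integral_cexp_mul_hermiteH_mul_exp (n : ℕ) (x : ℝ) :
    ∫ y : ℝ, cexp (I * x * y) * ((hermiteH n y * Real.exp (-y ^ 2) : ℝ) : ℂ) =
      √Real.pi * (I ^ n * x ^ n * cexp (-x ^ 2 / 4)) := by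
  induction n with
  | zero =>
    have hgauss := fourierIntegral_gaussian (b := 1) (by norm_num) x
    have hsqrt : (Real.pi : ℂ) ^ (1 / 2 : ℂ) = √Real.pi := by
      rw [Real.sqrt_eq_rpow, ofReal_cpow Real.pi_pos.le]
      norm_num
    norm_num [hermiteH] at hgauss ⊢
    rw [hgauss, hsqrt]
  | succ n ih =>
    have hderiv : deriv (fun y => ((hermiteH n y * Real.exp (-y ^ 2) : ℝ) : ℂ)) =
        fun y => -((hermiteH (n + 1) y * Real.exp (-y ^ 2) : ℝ) : ℂ) := by
      ext y
      simpa using ((hasDerivAt_hermiteH_mul_exp n y).ofReal_comp).deriv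
    have h := integral_cexp_smul_deriv (integrable_hermiteH_mul_exp n).ofReal
      (fun y => (hasDerivAt_hermiteH_mul_exp n y).ofReal_comp.differentiableAt)
      (by rw [hderiv]; exact (integrable_hermiteH_mul_exp (n + 1)).ofReal.neg) x
    simp only [hderiv, smul_eq_mul, mul_neg, integral_neg, ih] at h
    rw [neg_eq_iff_eq_neg.mp h]
    ring

theorem hermite_fourier_monomial (n : ℕ) (x : ℝ) :
    (1 / Real.sqrt Real.pi : ℂ) *
      ∫ y : ℝ, (hermiteH n y : ℂ) * Complex.exp (-(y : ℂ) ^ 2) *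
        Complex.exp (Complex.I * (x : ℂ) * (y : ℂ)) =
    Complex.I ^ n * (x : ℂ) ^ n * Complex.exp (-(x : ℂ) ^ 2 / 4) := by
  have hsqrt : (√Real.pi : ℂ) ≠ 0 := Complex.ofReal_ne_zero.mpr (by positivity)
  have hintegrand (y : ℝ) : (hermiteH n y : ℂ) * Complex.exp (-(y : ℂ) ^ 2) *
      Complex.exp (Complex.I * x * y) =
      Complex.exp (Complex.I * x * y) * ((hermiteH n y * Real.exp (-y ^ 2) : ℝ) : ℂ) := by
    push_cast
    ring
  simp only [hintegrand, integral_cexp_mul_hermiteH_mul_exp]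
  field_simp
end

section
/- Let n ≥ 1 be an integer, α a real number, and let f : ℝ → ℝ be defined by f(x) = L_n^{(α)}(x²). Then for every real x ≠ 0, f''(x) + ((2α+1)/x) f'(x) = -4(n+α) L_{n-1}^{(α)}(x²). -/
open MeasureTheory Finset

/-- Rising factorial (Pochhammer symbol) `(a)_k = a(a+1)⋯(a+k-1)`. -/
noncomputable def poch (a : ℝ) (k : ℕ) : ℝ := ∏ i ∈ Finset.range k, (a + i)

/-- Generalized Laguerre polynomial
`L_n^{(α)}(x) = Σ_{k=0}^n (-1)^k ((α+k+1)_{n-k} / ((n-k)! k!)) x^k`. -/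
noncomputable def laguerreL (n : ℕ) (α : ℝ) (x : ℝ) : ℝ :=
  ∑ k ∈ Finset.range (n + 1),
    (-1 : ℝ) ^ k * poch (α + k + 1) (n - k) /
      (((n - k).factorial : ℝ) * (k.factorial : ℝ)) * x ^ k

/-!
Put `t = x²`. For `g(x) = p(x²)` the operator `g'' + ((2α+1)/x) g'` becomes
`4 (d/dt (t p') + α p')` evaluated at `t = x²`, and this operator sends `t^(k+1)` to
`(k+1)(k+1+α) t^k`. On the coefficients of `L_{m+1}^{(α)}` that factor is absorbed by the
Pochhammer symbol through `a (a+1)_j = (a)_j (a+j)`, leaving `-(m+1+α)` times the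
coefficients of `L_m^{(α)}`.
-/

open Polynomial

lemma mul_poch_add_one (a : ℝ) (m : ℕ) : a * poch (a + 1) m = poch a m * (a + m) := by
  have h₁ : poch a (m + 1) = a * poch (a + 1) m := by
    rw [poch, prod_range_succ', poch]
    simp only [Nat.cast_add, Nat.cast_one, CharP.cast_eq_zero, add_zero, mul_comm, add_right_comm,
      add_assoc]
  have h₂ : poch a (m + 1) = poch a m * (a + m) := prod_range_succ _ _
  rw [← h₁, h₂]

noncomputable def laguerreCoeff (n : ℕ) (α : ℝ) (k : ℕ) : ℝ :=
  (-1 : ℝ) ^ k * poch (α + k + 1) (n - k) / (((n - k).factorial : ℝ) * (k.factorial : ℝ))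

lemma laguerreCoeff_succ {m k : ℕ} (hk : k ≤ m) (α : ℝ) :
    (k + 1) * (α + k + 1) * laguerreCoeff (m + 1) α (k + 1) =
      -(α + m + 1) * laguerreCoeff m α k := by
  obtain ⟨j, rfl⟩ := Nat.exists_eq_add_of_le hk
  have hpoch := mul_poch_add_one (α + k + 1) j
  simp only [laguerreCoeff, Nat.add_sub_add_right, Nat.add_sub_cancel_left, Nat.factorial_succ]
  push_cast
  field_simp
  rw [show α + (k + 1) + 1 = α + k + 1 + 1 by ring, pow_succ]
  linear_combination -(-1 : ℝ) ^ k * hpoch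

noncomputable def laguerrePoly (n : ℕ) (α : ℝ) : ℝ[X] :=
  ∑ k ∈ range (n + 1), C (laguerreCoeff n α k) * X ^ k

lemma eval_laguerrePoly (n : ℕ) (α x : ℝ) : (laguerrePoly n α).eval x = laguerreL n α x := by
  simp [laguerrePoly, laguerreL, eval_finsetSum, laguerreCoeff]

lemma coeff_laguerrePoly (n : ℕ) (α : ℝ) (k : ℕ) :
    (laguerrePoly n α).coeff k = if k ≤ n then laguerreCoeff n α k else 0 := by
  simp [laguerrePoly, finsetSum_coeff]

lemma coeff_derivative_X_mul_derivative_add {R : Type*} [CommRing R] (p : R[X]) (α : R)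
    (k : ℕ) :
    (derivative (X * derivative p) + C α * derivative p).coeff k =
      (k + 1) * (α + k + 1) * p.coeff (k + 1) := by
  simp only [coeff_add, coeff_derivative, coeff_X_mul, coeff_C_mul]
  ring

lemma laguerrePoly_lowering (m : ℕ) (α : ℝ) :
    derivative (X * derivative (laguerrePoly (m + 1) α)) +
        C α * derivative (laguerrePoly (m + 1) α) =
      C (-(α + m + 1)) * laguerrePoly m α := by
  ext k
  rw [coeff_derivative_X_mul_derivative_add, coeff_C_mul, coeff_laguerrePoly, coeff_laguerrePoly]
  by_cases hk : k ≤ m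
  · simp [hk, laguerreCoeff_succ hk]
  · simp [hk]

lemma radial_eval_comp_X_sq {K : Type*} [Field K] (p : K[X]) (α : K) {x : K} (hx : x ≠ 0) :
    (derivative (derivative (p.comp (X ^ 2)))).eval x +
        (2 * α + 1) / x * (derivative (p.comp (X ^ 2))).eval x =
      4 * (derivative (X * derivative p) + C α * derivative p).eval (x ^ 2) := by
  simp only [derivative_comp, derivative_mul, derivative_X_pow, derivative_X, derivative_C,
    eval_add, eval_mul, eval_comp, eval_pow, eval_X, eval_C, eval_one, eval_zero]
  field_simp
  ring

theorem laguerre_dunkl_squared (n : ℕ) (hn : 1 ≤ n) (α : ℝ)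
    (f : ℝ → ℝ) (hf : ∀ x, f x = laguerreL n α (x ^ 2)) (x : ℝ) (hx : x ≠ 0) :
    deriv (deriv f) x + (2 * α + 1) / x * deriv f x =
      -4 * ((n : ℝ) + α) * laguerreL (n - 1) α (x ^ 2) := by
  obtain ⟨m, rfl⟩ := Nat.exists_eq_add_of_le' hn
  have hf_poly : f = fun y => ((laguerrePoly (m + 1) α).comp (X ^ 2)).eval y := by
    funext y
    simp [hf, eval_comp, eval_laguerrePoly]
  have hf_deriv :
      deriv f = fun y => (derivative ((laguerrePoly (m + 1) α).comp (X ^ 2))).eval y := by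
    funext y
    rw [hf_poly, Polynomial.deriv]
  rw [hf_deriv, Polynomial.deriv, radial_eval_comp_X_sq _ _ hx, laguerrePoly_lowering, eval_C_mul,
    eval_laguerrePoly, Nat.add_sub_cancel]
  push_cast
  ring
end
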